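/- Let H : ℝⁿ × ℝⁿ × ℝ → ℝ be continuously differentiable and W : ℝⁿ → ℝ twice continuously differentiable. Then the following three conditions are equivalent: (1) the holonomic part of the evolution vector field composed with the first jet prolongation of 𝒯*W equals ε_H ∘ 𝒯*W, i.e., for every x ∈ ℝⁿ, (H_{x*}, ∇²W(x) H_{x*}, ⟨∇W(x), H_{x*}⟩) = (H_{x*}, −H_x − H_z ∇W(x), ⟨∇W(x), H_{x*}⟩), with all partial derivatives of H evaluated at (x, ∇W(x), W(x)); (2) the vertical representative of ε_H vanishes on the first jet prolongation of 𝒯*W, i.e., for every x, −H_x(x, ∇W(x), W(x)) − H_z(x, ∇W(x), W(x)) ∇W(x) − ∇²W(x) H_{x*}(x, ∇W(x), W(x)) = 0; (3) the function x ↦ H(x, ∇W(x), W(x)) is constant on ℝⁿ. -/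

import Mathlib

open scoped RealInnerProductSpace

noncomputable section

open InnerProductSpace

variable {E : Type*} [NormedAddCommGroup E] [InnerProductSpace ℝ E] [CompleteSpace E]

lemma inner_gradient_eq' (f : E → ℝ) (x v : E) :
    ⟪gradient f x, v⟫ = fderiv ℝ f x v := by
  rw [gradient]; exact toDual_symm_apply

lemma fderiv_triple (H : E × E × ℝ → ℝ) {p : E × E × ℝ} (hH : DifferentiableAt ℝ H p)
    (v w : E) (c : ℝ) :
    fderiv ℝ H p (v, w, c) =
      ⟪gradient (fun y => H (y, p.2.1, p.2.2)) p.1, v⟫ +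
      ⟪gradient (fun q => H (p.1, q, p.2.2)) p.2.1, w⟫ +
      deriv (fun z => H (p.1, p.2.1, z)) p.2.2 * c := by
  have h1 : HasFDerivAt (fun y => H (y, p.2.1, p.2.2))
      ((fderiv ℝ H p).comp ((ContinuousLinearMap.id ℝ E).prod 0)) p.1 := by
    exact hH.hasFDerivAt.comp p.1 ((hasFDerivAt_id _).prodMk (hasFDerivAt_const _ _))
  have h2 : HasFDerivAt (fun q => H (p.1, q, p.2.2))
      ((fderiv ℝ H p).comp ((0 : E →L[ℝ] E).prod
        ((ContinuousLinearMap.id ℝ E).prod (0 : E →L[ℝ] ℝ)))) p.2.1 := by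
    exact hH.hasFDerivAt.comp p.2.1
      ((hasFDerivAt_const _ _).prodMk ((hasFDerivAt_id _).prodMk (hasFDerivAt_const _ _)))
  have h3 : HasDerivAt (fun z => H (p.1, p.2.1, z))
      (fderiv ℝ H p (0, 0, 1)) p.2.2 := by
    have := hH.hasFDerivAt.comp_hasDerivAt p.2.2
      ((hasDerivAt_const p.2.2 p.1).prodMk
        ((hasDerivAt_const p.2.2 p.2.1).prodMk (hasDerivAt_id p.2.2)))
    exact this
  rw [inner_gradient_eq', inner_gradient_eq', h1.fderiv, h2.fderiv, h3.deriv]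
  have hv : (v, w, c) = ((v, 0, 0) : E × E × ℝ) + (0, w, 0) + (0, 0, c) := by
    simp [Prod.ext_iff]
  have hc : ((0, 0, c) : E × E × ℝ) = c • ((0, 0, 1) : E × E × ℝ) := by
    simp [Prod.ext_iff]
  rw [hv, map_add, map_add, hc, map_smul]
  simp [mul_comm]
  rfl

lemma hess_symm (W : E → ℝ) (hW : ContDiff ℝ 2 W) (x u v : E) :
    ⟪fderiv ℝ (gradient W) x u, v⟫ = ⟪fderiv ℝ (gradient W) x v, u⟫ := by
  have hg : gradient W = fun y => (toDual ℝ E).symm (fderiv ℝ W y) := rfl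
  have hcomp := LinearIsometryEquiv.comp_fderiv (𝕜 := ℝ)
    (iso := (toDual ℝ E).symm) (f := fderiv ℝ W) (x := x)
  have hsym := hW.contDiffAt.isSymmSndFDerivAt (by simp) (x := x)
  rw [hg]
  rw [show (fun y => (toDual ℝ E).symm (fderiv ℝ W y))
      = (⇑(toDual ℝ E).symm ∘ fderiv ℝ W) from rfl, hcomp]
  show ⟪(toDual ℝ E).symm ((fderiv ℝ (fderiv ℝ W) x) u), v⟫_ℝ
      = ⟪(toDual ℝ E).symm ((fderiv ℝ (fderiv ℝ W) x) v), u⟫_ℝ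
  rw [toDual_symm_apply, toDual_symm_apply]
  exact hsym u v

lemma gradient_W_contDiff (W : E → ℝ) (hW : ContDiff ℝ 2 W) :
    ContDiff ℝ 1 (gradient W) := by
  have : ContDiff ℝ 1 (fderiv ℝ W) := hW.fderiv_right (by norm_num)
  exact (toDual ℝ E).symm.contDiff.comp this

lemma key_hasGradient (H : E × E × ℝ → ℝ) (W : E → ℝ)
    (hH : ContDiff ℝ 1 H) (hW : ContDiff ℝ 2 W) (x : E) :
    HasGradientAt (fun y => H (y, gradient W y, W y))
      (gradient (fun y => H (y, gradient W x, W x)) x +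
        fderiv ℝ (gradient W) x (gradient (fun p => H (x, p, W x)) (gradient W x)) +
        deriv (fun z => H (x, gradient W x, z)) (W x) • gradient W x) x := by
  have hW1 : Differentiable ℝ W := (hW.of_le one_le_two).differentiable one_ne_zero
  have hg : ContDiff ℝ 1 (gradient W) := gradient_W_contDiff W hW
  set p : E × E × ℝ := (x, gradient W x, W x) with hp
  have hφ : HasFDerivAt (fun y : E => (y, gradient W y, W y))
      ((ContinuousLinearMap.id ℝ E).prod
        ((fderiv ℝ (gradient W) x).prod (fderiv ℝ W x))) x :=
    (hasFDerivAt_id x).prodMk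
      ((((hg.differentiable one_ne_zero) x).hasFDerivAt).prodMk (hW1 x).hasFDerivAt)
  have hHp : DifferentiableAt ℝ H p := (hH.differentiable one_ne_zero) p
  have hc : HasFDerivAt (fun y => H (y, gradient W y, W y))
      ((fderiv ℝ H p).comp ((ContinuousLinearMap.id ℝ E).prod
        ((fderiv ℝ (gradient W) x).prod (fderiv ℝ W x)))) x :=
    hHp.hasFDerivAt.comp x hφ
  rw [hasGradientAt_iff_hasFDerivAt]
  refine hc.congr_fderiv ?_
  symm
  ext v
  rw [toDual_apply_apply]
  simp only [ContinuousLinearMap.coe_comp', Function.comp_apply,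
    ContinuousLinearMap.prod_apply, ContinuousLinearMap.coe_id', id_eq]
  rw [fderiv_triple H hHp v (fderiv ℝ (gradient W) x v) (fderiv ℝ W x v)]
  have e1 : ⟪gradient (fun q => H (p.1, q, p.2.2)) p.2.1,
      fderiv ℝ (gradient W) x v⟫ =
      ⟪fderiv ℝ (gradient W) x
        (gradient (fun p' => H (x, p', W x)) (gradient W x)), v⟫ := by
    rw [real_inner_comm]
    exact hess_symm W hW x v _
  have e2 : deriv (fun z => H (p.1, p.2.1, z)) p.2.2 * fderiv ℝ W x v =
      ⟪deriv (fun z => H (x, gradient W x, z)) (W x) • gradient W x, v⟫ := by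
    rw [real_inner_smul_left, inner_gradient_eq']
  rw [e1, e2]
  rw [inner_add_left, inner_add_left]

lemma const_iff_vertical (H : E × E × ℝ → ℝ) (W : E → ℝ)
    (hH : ContDiff ℝ 1 H) (hW : ContDiff ℝ 2 W) :
    (∀ x : E,
        -gradient (fun y => H (y, gradient W x, W x)) x -
          deriv (fun z => H (x, gradient W x, z)) (W x) • gradient W x -
          fderiv ℝ (gradient W) x
            (gradient (fun p => H (x, p, W x)) (gradient W x)) = 0) ↔
      (∃ ε : ℝ, ∀ x : E, H (x, gradient W x, W x) = ε) := by
  set F : E → ℝ := fun y => H (y, gradient W y, W y) with hF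
  have hkey := key_hasGradient H W hH hW
  constructor
  · intro h
    have hzero : ∀ x : E, HasGradientAt F 0 x := by
      intro x
      have hv : (gradient (fun y => H (y, gradient W x, W x)) x +
          fderiv ℝ (gradient W) x (gradient (fun p => H (x, p, W x)) (gradient W x)) +
          deriv (fun z => H (x, gradient W x, z)) (W x) • gradient W x) =
          -(-gradient (fun y => H (y, gradient W x, W x)) x -
            deriv (fun z => H (x, gradient W x, z)) (W x) • gradient W x -
            fderiv ℝ (gradient W) x
              (gradient (fun p => H (x, p, W x)) (gradient W x))) := by abel
      have := hkey x
      rw [hv, h x, neg_zero] at this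
      exact this
    have hdiff : Differentiable ℝ F := fun x => (hzero x).differentiableAt
    have hfd : ∀ x : E, fderiv ℝ F x = 0 := by
      intro x
      have := (hasGradientAt_iff_hasFDerivAt.mp (hzero x)).fderiv
      rw [this, map_zero]
    exact ⟨F 0, fun x => is_const_of_fderiv_eq_zero hdiff hfd x 0⟩
  · rintro ⟨ε, hε⟩ x
    have hFc : F = fun _ => ε := funext hε
    have h0 : gradient F x = 0 := by rw [hFc]; exact gradient_const x ε
    have := (hkey x).gradient
    rw [h0] at this
    have hv : -gradient (fun y => H (y, gradient W x, W x)) x -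
        deriv (fun z => H (x, gradient W x, z)) (W x) • gradient W x -
        fderiv ℝ (gradient W) x
          (gradient (fun p => H (x, p, W x)) (gradient W x)) =
        -(gradient (fun y => H (y, gradient W x, W x)) x +
          fderiv ℝ (gradient W) x (gradient (fun p => H (x, p, W x)) (gradient W x)) +
          deriv (fun z => H (x, gradient W x, z)) (W x) • gradient W x) := by abel
    rw [hv, ← this, neg_zero]


/-- holonomic–vertical decomposition of the evolution Hamiltonian vector
field: equivalence of (1) the holonomic part on the first jet prolongation of `𝒯*W`
equalling `ε_H ∘ 𝒯*W`, (2) the vanishing of the vertical representative there, and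
(3) `x ↦ H(x, ∇W(x), W(x))` being constant. -/
theorem evolution_holonomic_vertical_hamilton_jacobi
    (n : ℕ)
    (H : EuclideanSpace ℝ (Fin n) × EuclideanSpace ℝ (Fin n) × ℝ → ℝ)
    (W : EuclideanSpace ℝ (Fin n) → ℝ)
    (hH : ContDiff ℝ 1 H) (hW : ContDiff ℝ 2 W) :
    ((∀ x : EuclideanSpace ℝ (Fin n),
        ((gradient (fun p => H (x, p, W x)) (gradient W x),
            fderiv ℝ (gradient W) x
              (gradient (fun p => H (x, p, W x)) (gradient W x)),
            ⟪gradient W x, gradient (fun p => H (x, p, W x)) (gradient W x)⟫) :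
          EuclideanSpace ℝ (Fin n) × EuclideanSpace ℝ (Fin n) × ℝ) =
        (gradient (fun p => H (x, p, W x)) (gradient W x),
          -gradient (fun y => H (y, gradient W x, W x)) x -
            deriv (fun z => H (x, gradient W x, z)) (W x) • gradient W x,
          ⟪gradient W x, gradient (fun p => H (x, p, W x)) (gradient W x)⟫)) ↔
      (∀ x : EuclideanSpace ℝ (Fin n),
        -gradient (fun y => H (y, gradient W x, W x)) x -
          deriv (fun z => H (x, gradient W x, z)) (W x) • gradient W x -
          fderiv ℝ (gradient W) x
            (gradient (fun p => H (x, p, W x)) (gradient W x)) = 0)) ∧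
    ((∀ x : EuclideanSpace ℝ (Fin n),
        -gradient (fun y => H (y, gradient W x, W x)) x -
          deriv (fun z => H (x, gradient W x, z)) (W x) • gradient W x -
          fderiv ℝ (gradient W) x
            (gradient (fun p => H (x, p, W x)) (gradient W x)) = 0) ↔
      (∃ ε : ℝ, ∀ x : EuclideanSpace ℝ (Fin n), H (x, gradient W x, W x) = ε)) := by
  constructor
  · constructor
    · intro h x
      have h2 := ((Prod.mk.injEq _ _ _ _).mp (h x)).2
      have h3 := ((Prod.mk.injEq _ _ _ _).mp h2).1
      rw [sub_eq_zero]
      exact h3.symm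
    · intro h x
      have h3 := sub_eq_zero.mp (h x)
      simp only [Prod.mk.injEq]
      exact ⟨trivial, h3.symm, trivial⟩
  · exact const_iff_vertical H W hH hW
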